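/- For 0 < c < 1 real, the Mellin–Barnes integral −(1/(2πi)) ∫_{c−i∞}^{c+i∞} z^{−s} ζ(−s) / sin(πs) ds converges absolutely for every complex z with |arg z| < π and defines an analytic function of z there. -/

import Mathlib

/-!
On the line `Re s = c`, the functional equation
`ζ(-s) = 2 (2π)^(-1-s) Γ(1+s) cos(π(1+s)/2) ζ(1+s)` together with `|Γ(1+s)| ≤ Γ(1+c)`,
`|ζ(1+s)| ≤ ζ(1+c)` and `|cos w| ≤ cosh (Im w)` gives `|ζ(-c-it)| ≪ e^(π|t|/2)`, whereas
`|sin (π(c+it))| ≥ sin (πc) cosh (πt) ≫ e^(π|t|)`. So the kernel `ζ(-s) / sin (πs)` is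
`O(e^(-π|t|/2))`, and as `|z^(-s)| ≤ |z|^(-c) e^(|arg z| |t|)`, the integrand and its
`z`-derivative `-s z^(-s-1) ζ(-s) / sin (πs)` are dominated, locally uniformly in `z` in the sector
`|arg z| < π/2`, by integrable functions `(|c| + |t|) e^(-ε|t|)`; differentiation under the
integral sign then gives holomorphy.
-/

open Real MeasureTheory Set Complex Filter Topology

theorem integrable_exp_neg_mul_abs {b : ℝ} (hb : 0 < b) :
    Integrable fun t : ℝ => rexp (-b * |t|) := by
  set g := (Ici 0).indicator fun t : ℝ => rexp (-b * t)
  have hg : Integrable g := ((exp_neg_integrableOn_Ioi (-1) hb).mono_set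
    (Ici_subset_Ioi.2 (by norm_num))).integrable_indicator measurableSet_Ici
  have hg_nonneg (t : ℝ) : 0 ≤ g t := indicator_nonneg (fun _ _ => (exp_pos _).le) t
  refine (hg.add hg.comp_neg).mono' (by fun_prop) (ae_of_all _ fun t => ?_)
  rw [norm_of_nonneg (exp_pos _).le, Pi.add_apply]
  rcases le_total 0 t with ht | ht
  · have : g t = rexp (-b * |t|) := by simp [g, ht, abs_of_nonneg ht]
    linarith [hg_nonneg (-t)]
  · have : g (-t) = rexp (-b * |t|) := by simp [g, ht, abs_of_nonpos ht]
    linarith [hg_nonneg t]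

theorem integrable_add_abs_mul_exp_neg_mul_abs (a : ℝ) {b : ℝ} (hb : 0 < b) :
    Integrable fun t : ℝ => (a + |t|) * rexp (-b * |t|) := by
  refine ((integrable_exp_neg_mul_abs (half_pos hb)).const_mul (|a| + 2 / b)).mono' (by fun_prop)
    (ae_of_all _ fun t => ?_)
  have hpoly : ‖a + |t|‖ ≤ (|a| + 2 / b) * rexp (b / 2 * |t|) := by
    have : |t| ≤ 2 / b * rexp (b / 2 * |t|) := by
      rw [div_mul_eq_mul_div, le_div_iff₀ hb]
      linarith [add_one_le_exp (b / 2 * |t|)]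
    have := norm_add_le a |t|
    simp only [Real.norm_eq_abs, abs_abs] at this ⊢
    have hone : 1 ≤ rexp (b / 2 * |t|) := one_le_exp (by positivity)
    nlinarith [mul_le_mul_of_nonneg_left hone (abs_nonneg a)]
  calc ‖(a + |t|) * rexp (-b * |t|)‖ = ‖a + |t|‖ * rexp (-b * |t|) := by
        rw [norm_mul, norm_of_nonneg (exp_pos _).le]
    _ ≤ (|a| + 2 / b) * rexp (b / 2 * |t|) * rexp (-b * |t|) := by gcongr
    _ = (|a| + 2 / b) * rexp (-(b / 2) * |t|) := by rw [mul_assoc, ← Real.exp_add]; ring_nf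

theorem Real.cosh_le_exp_abs (x : ℝ) : cosh x ≤ rexp |x| := by
  rw [← cosh_abs, cosh_eq]
  have : rexp (-|x|) ≤ rexp |x| := exp_le_exp.2 (by linarith [abs_nonneg x])
  linarith

theorem Real.exp_abs_le_two_mul_cosh (x : ℝ) : rexp |x| ≤ 2 * cosh x := by
  rw [cosh_eq]; linarith [exp_abs_le x]

theorem Complex.norm_cos_le_cosh_im (z : ℂ) : ‖Complex.cos z‖ ≤ Real.cosh z.im := by
  rw [Complex.cos, Real.cosh_eq, norm_div, Complex.norm_two]
  gcongr
  refine (norm_add_le _ _).trans_eq ?_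
  simp [Complex.norm_exp, add_comm]

theorem Complex.abs_sin_re_mul_cosh_im_le_norm_sin (z : ℂ) :
    |Real.sin z.re| * Real.cosh z.im ≤ ‖Complex.sin z‖ := by
  have h := Complex.abs_re_le_norm (Complex.sin z)
  rw [Complex.sin_eq] at h ⊢
  simpa [← ofReal_sin, ← ofReal_cosh, ← ofReal_cos, ← ofReal_sinh, abs_mul,
    abs_of_pos (cosh_pos _)] using h

theorem Complex.norm_Gamma_le_Gamma_re {w : ℂ} (hw : 0 < w.re) :
    ‖Complex.Gamma w‖ ≤ Real.Gamma w.re := by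
  rw [Complex.Gamma_eq_integral hw, Real.Gamma_eq_integral hw]
  refine norm_integral_le_of_norm_le (Real.GammaIntegral_convergent hw) ?_
  filter_upwards [ae_restrict_mem measurableSet_Ioi] with x hx
  simp [Complex.norm_cpow_eq_rpow_re_of_pos hx, Complex.norm_exp]

theorem norm_riemannZeta_le_tsum {w : ℂ} (hw : 1 < w.re) :
    ‖riemannZeta w‖ ≤ ∑' n : ℕ, 1 / (n : ℝ) ^ w.re := by
  have hterm (n : ℕ) : ‖1 / (n : ℂ) ^ w‖ = 1 / (n : ℝ) ^ w.re := by
    rcases Nat.eq_zero_or_pos n with rfl | hn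
    · simp [Complex.zero_cpow (Complex.ne_zero_of_one_lt_re hw), (by linarith : w.re ≠ 0)]
    · rw [norm_div, norm_one, Complex.norm_natCast_cpow_of_pos hn]
  have hsum : Summable fun n : ℕ => ‖1 / (n : ℂ) ^ w‖ :=
    (Real.summable_one_div_nat_rpow.2 hw).congr fun n => (hterm n).symm
  rw [zeta_eq_tsum_one_div_nat_cpow hw, ← tsum_congr hterm]
  exact norm_tsum_le_tsum_norm hsum

theorem norm_riemannZeta_one_sub_le {w : ℂ} (hw : 1 < w.re) :
    ‖riemannZeta (1 - w)‖ ≤ 2 * (2 * π) ^ (-w.re) * Real.Gamma w.re *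
      Real.cosh (π / 2 * w.im) * ∑' n : ℕ, 1 / (n : ℝ) ^ w.re := by
  have hw_ne_neg (n : ℕ) : w ≠ -n := fun h => by
    have := congrArg re h
    simp only [neg_re, natCast_re] at this
    linarith [n.cast_nonneg (α := ℝ)]
  have hw_ne_one : w ≠ 1 := fun h => by simp [h] at hw
  have h2π : ‖(2 * π : ℂ) ^ (-w)‖ = (2 * π) ^ (-w.re) := by
    rw [← ofReal_ofNat, ← ofReal_mul, norm_cpow_eq_rpow_re_of_pos (by positivity), neg_re]
  have hcos : ‖Complex.cos (π * w / 2)‖ ≤ Real.cosh (π / 2 * w.im) :=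
    (norm_cos_le_cosh_im _).trans_eq (by
      congr 1
      simp only [div_ofNat_im, mul_im, ofReal_re, ofReal_im, zero_mul, add_zero]
      ring)
  rw [riemannZeta_one_sub hw_ne_neg hw_ne_one, norm_mul, norm_mul, norm_mul, norm_mul, h2π,
    Complex.norm_two]
  have := Real.Gamma_pos_of_pos (by linarith : 0 < w.re)
  gcongr
  · exact norm_Gamma_le_Gamma_re (by linarith)
  · exact norm_riemannZeta_le_tsum hw

section ZetaKernel

variable {c : ℝ}

theorem norm_riemannZeta_neg_le (hc : 0 < c) (t : ℝ) :
    ‖riemannZeta (-(c + t * I))‖ ≤ 2 * (2 * π) ^ (-(1 + c)) * Real.Gamma (1 + c) *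
      (∑' n : ℕ, 1 / (n : ℝ) ^ (1 + c)) * rexp (π / 2 * |t|) := by
  have hw : (1 + (c + t * I)).re = 1 + c := by simp
  have hw' : (1 + (c + t * I)).im = t := by simp
  have h := norm_riemannZeta_one_sub_le (w := 1 + (c + t * I)) (by rw [hw]; linarith)
  rw [sub_add_cancel_left, hw, hw'] at h
  refine h.trans ?_
  have := Real.Gamma_pos_of_pos (by linarith : 0 < 1 + c)
  rw [mul_right_comm _ (Real.cosh _)]
  gcongr
  refine (cosh_le_exp_abs _).trans_eq ?_
  rw [abs_mul, abs_of_pos (by positivity : 0 < π / 2)]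

theorem abs_sin_mul_exp_abs_le_two_mul_norm_sin (t : ℝ) :
    |Real.sin (π * c)| * rexp (π * |t|) ≤ 2 * ‖Complex.sin (π * (c + t * I))‖ := by
  have h := abs_sin_re_mul_cosh_im_le_norm_sin (π * (c + t * I))
  have hexp := exp_abs_le_two_mul_cosh (π * t)
  simp only [mul_re, ofReal_re, add_re, mul_im, I_re, I_im, ofReal_im, add_im, mul_zero, mul_one,
    sub_self, add_zero, zero_add, zero_mul, sub_zero] at h
  rw [abs_mul, abs_of_pos pi_pos] at hexp
  nlinarith [abs_nonneg (Real.sin (π * c))]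

theorem Real.sin_pi_mul_pos (hc0 : 0 < c) (hc1 : c < 1) : 0 < Real.sin (π * c) :=
  sin_pos_of_pos_of_lt_pi (by positivity) (by nlinarith [pi_pos])

theorem sin_pi_mul_add_mul_I_ne_zero (hc0 : 0 < c) (hc1 : c < 1) (t : ℝ) :
    Complex.sin (π * (c + t * I)) ≠ 0 := by
  have hsin := abs_pos_of_pos (sin_pi_mul_pos hc0 hc1)
  intro h
  have := abs_sin_mul_exp_abs_le_two_mul_norm_sin (c := c) t
  rw [h, norm_zero, mul_zero] at this
  exact this.not_gt (by positivity)

theorem exists_norm_riemannZeta_neg_div_sin_le (hc0 : 0 < c) (hc1 : c < 1) :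
    ∃ K, ∀ t : ℝ, ‖riemannZeta (-(c + t * I)) / Complex.sin (π * (c + t * I))‖ ≤
      K * rexp (-(π / 2) * |t|) := by
  set A := 2 * (2 * π) ^ (-(1 + c)) * Real.Gamma (1 + c) * ∑' n : ℕ, 1 / (n : ℝ) ^ (1 + c)
  have hsin := sin_pi_mul_pos hc0 hc1
  refine ⟨2 * A / Real.sin (π * c), fun t => ?_⟩
  have hden := abs_sin_mul_exp_abs_le_two_mul_norm_sin (c := c) t
  rw [abs_of_pos hsin] at hden
  have hA : 0 ≤ A := by
    have := Real.Gamma_pos_of_pos (by linarith : 0 < 1 + c)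
    have : 0 ≤ ∑' n : ℕ, 1 / (n : ℝ) ^ (1 + c) := tsum_nonneg fun n => by positivity
    positivity
  rw [norm_div, div_le_iff₀ (norm_pos_iff.2 (sin_pi_mul_add_mul_I_ne_zero hc0 hc1 t))]
  calc ‖riemannZeta (-(c + t * I))‖ ≤ A * rexp (π / 2 * |t|) := norm_riemannZeta_neg_le hc0 t
    _ = 2 * A / Real.sin (π * c) * rexp (-(π / 2) * |t|) *
          (Real.sin (π * c) * rexp (π * |t|) / 2) := by
        rw [show π / 2 * |t| = -(π / 2) * |t| + π * |t| by ring, Real.exp_add]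
        field_simp
    _ ≤ 2 * A / Real.sin (π * c) * rexp (-(π / 2) * |t|) * ‖Complex.sin (π * (c + t * I))‖ := by
        gcongr; linarith

theorem continuous_riemannZeta_neg_div_sin (hc0 : 0 < c) (hc1 : c < 1) :
    Continuous fun t : ℝ => riemannZeta (-(c + t * I)) / Complex.sin (π * (c + t * I)) := by
  refine continuous_iff_continuousAt.2 fun t => ContinuousAt.div ?_ (by fun_prop)
    (sin_pi_mul_add_mul_I_ne_zero hc0 hc1 t)
  have hne : -((c : ℂ) + t * I) ≠ 1 := fun h => by
    have := congrArg re h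
    simp only [neg_add_rev, add_re, neg_re, mul_re, ofReal_re, I_re, mul_zero, ofReal_im, I_im,
      mul_one, sub_self, neg_zero, zero_add, one_re] at this
    linarith
  exact (differentiableAt_riemannZeta hne).continuousAt.comp
    (f := fun t : ℝ => -((c : ℂ) + t * I)) (by fun_prop)

end ZetaKernel

theorem Complex.mem_slitPlane_of_abs_arg_lt {z : ℂ} {β : ℝ} (hβ : β ≤ π) (hz : z ≠ 0)
    (harg : |arg z| < β) : z ∈ slitPlane :=
  mem_slitPlane_iff_arg.2 ⟨fun h => by rw [h, abs_of_pos pi_pos] at harg; linarith, hz⟩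

theorem Complex.isOpen_setOf_abs_arg_lt {β : ℝ} (hβ : β ≤ π) :
    IsOpen {z : ℂ | z ≠ 0 ∧ |arg z| < β} :=
  isOpen_iff_mem_nhds.2 fun _ ⟨hz, harg⟩ => (eventually_ne_nhds hz).and <|
    (continuousAt_arg (mem_slitPlane_of_abs_arg_lt hβ hz harg)).abs.eventually_lt
      continuousAt_const harg

theorem Complex.norm_cpow_neg_add_mul_I_le (z : ℂ) (σ t : ℝ) :
    ‖z ^ (-(σ + t * I))‖ ≤ ‖z‖ ^ (-σ) * rexp (|arg z| * |t|) := by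
  refine (norm_cpow_le _ _).trans ?_
  simp only [neg_re, add_re, ofReal_re, mul_re, I_re, mul_zero, ofReal_im, I_im, mul_one,
    sub_self, add_zero, neg_im, add_im, mul_im, zero_add, mul_neg, Real.exp_neg, div_inv_eq_mul]
  exact mul_le_mul_of_nonneg_left (Real.exp_le_exp.2 ((le_abs_self _).trans (abs_mul _ _).le))
    (by positivity)

section MellinBarnes

variable {g : ℝ → ℂ} {c β K : ℝ}

theorem norm_cpow_mul_le_of_norm_le (hgK : ∀ t, ‖g t‖ ≤ K * rexp (-β * |t|)) (z : ℂ) (σ t : ℝ) :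
    ‖z ^ (-(σ + t * I)) * g t‖ ≤ ‖z‖ ^ (-σ) * K * rexp (-(β - |arg z|) * |t|) :=
  calc ‖z ^ (-(σ + t * I)) * g t‖
      ≤ ‖z‖ ^ (-σ) * rexp (|arg z| * |t|) * (K * rexp (-β * |t|)) := by
        rw [norm_mul]
        exact mul_le_mul (norm_cpow_neg_add_mul_I_le z σ t) (hgK t) (norm_nonneg _) (by positivity)
    _ = ‖z‖ ^ (-σ) * K * rexp (-(β - |arg z|) * |t|) := by
        rw [mul_mul_mul_comm, ← Real.exp_add]; ring_nf

theorem integrable_cpow_mul (hg : Continuous g) (hgK : ∀ t, ‖g t‖ ≤ K * rexp (-β * |t|))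
    {z : ℂ} (hz : z ≠ 0) (harg : |arg z| < β) :
    Integrable fun t : ℝ => z ^ (-(c + t * I)) * g t := by
  have : NeZero z := ⟨hz⟩
  exact ((integrable_exp_neg_mul_abs (sub_pos.2 harg)).const_mul _).mono' (by fun_prop)
    (ae_of_all _ (norm_cpow_mul_le_of_norm_le hgK z c))

theorem hasDerivAt_integral_cpow_mul (hg : Continuous g) (hgK : ∀ t, ‖g t‖ ≤ K * rexp (-β * |t|))
    (hβ : β ≤ π) {z₀ : ℂ} (hz₀ : z₀ ≠ 0) (harg₀ : |arg z₀| < β) :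
    HasDerivAt (fun z => ∫ t : ℝ, z ^ (-(c + t * I)) * g t)
      (∫ t : ℝ, -(c + t * I) * z₀ ^ (-(c + t * I) - 1) * g t) z₀ := by
  set a := (|arg z₀| + β) / 2
  set M := ‖z₀‖ ^ (-(c + 1)) + 1
  have hK : 0 ≤ K := by
    have := (norm_nonneg _).trans (hgK 0)
    rwa [abs_zero, mul_zero, Real.exp_zero, mul_one] at this
  have hnear : ∀ᶠ z in 𝓝 z₀, z ≠ 0 ∧ |arg z| < a ∧ ‖z‖ ^ (-(c + 1)) < M :=
    (eventually_ne_nhds hz₀).and <| ((continuousAt_arg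
      (mem_slitPlane_of_abs_arg_lt hβ hz₀ harg₀)).abs.eventually_lt continuousAt_const
        (by simp only [a]; linarith)).and <|
      (continuous_norm.continuousAt.rpow_const (Or.inl (norm_ne_zero_iff.2 hz₀))).eventually_lt
        continuousAt_const (lt_add_one _)
  have hslit {z : ℂ} (hz : z ≠ 0 ∧ |arg z| < a ∧ ‖z‖ ^ (-(c + 1)) < M) : z ∈ slitPlane :=
    mem_slitPlane_of_abs_arg_lt hβ hz.1 (hz.2.1.trans (by simp only [a]; linarith))
  have : NeZero z₀ := ⟨hz₀⟩
  refine (hasDerivAt_integral_of_dominated_loc_of_deriv_le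
    (F := fun z t => z ^ (-(c + t * I)) * g t)
    (F' := fun z t => -(c + t * I) * z ^ (-(c + t * I) - 1) * g t) hnear
    (hnear.mono fun z hz => ?_) (integrable_cpow_mul hg hgK hz₀ harg₀) (by fun_prop)
    (bound := fun t => M * K * ((|c| + |t|) * rexp (-(β - a) * |t|))) (ae_of_all _ fun t z hz => ?_)
    (((integrable_add_abs_mul_exp_neg_mul_abs |c| (by simp only [a]; linarith))).const_mul _)
    (ae_of_all _ fun t z hz => ?_)).2
  · have : NeZero z := ⟨hz.1⟩
    exact (by fun_prop : Continuous fun t : ℝ => z ^ (-(c + t * I)) * g t).aestronglyMeasurable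
  · have hs : ‖(c : ℂ) + t * I‖ ≤ |c| + |t| := by
      simpa using norm_add_le (c : ℂ) (t * I)
    have hshift : -((c : ℂ) + t * I) - 1 = -(((c + 1 : ℝ) : ℂ) + t * I) := by push_cast; ring
    calc ‖-(c + t * I) * z ^ (-(c + t * I) - 1) * g t‖
        = ‖(c : ℂ) + t * I‖ * ‖z ^ (-(((c + 1 : ℝ) : ℂ) + t * I)) * g t‖ := by
          rw [mul_assoc, norm_mul, norm_neg, hshift]
      _ ≤ (|c| + |t|) * (‖z‖ ^ (-(c + 1)) * K * rexp (-(β - |arg z|) * |t|)) :=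
          mul_le_mul hs (norm_cpow_mul_le_of_norm_le hgK z _ t) (norm_nonneg _) (by positivity)
      _ ≤ (|c| + |t|) * (M * K * rexp (-(β - a) * |t|)) := by
          gcongr
          · exact hz.2.2.le
          · exact hz.2.1.le
      _ = M * K * ((|c| + |t|) * rexp (-(β - a) * |t|)) := by ring
  · exact ((hasStrictDerivAt_cpow_const (hslit hz)).hasDerivAt.mul_const (g t))

end MellinBarnes

/-- For `0 < c < 1`, the Mellin–Barnes integrand of
`−(1/(2πi)) ∫_{c−i∞}^{c+i∞} z^{−s} ζ(−s)/sin(πs) ds` (contour `s = c + it`, `ds = i dt`)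
is absolutely integrable for every `z ≠ 0` with `|arg z| < π/2`, and the resulting
function of `z` is analytic on that region. -/
theorem stmt18 (c : ℝ) (hc0 : 0 < c) (hc1 : c < 1) :
    (∀ z : ℂ, z ≠ 0 → |Complex.arg z| < π / 2 →
      Integrable (fun t : ℝ =>
        z ^ (-((c : ℂ) + t * Complex.I)) * riemannZeta (-((c : ℂ) + t * Complex.I)) /
          Complex.sin (π * ((c : ℂ) + t * Complex.I)))) ∧
    AnalyticOn ℂ
      (fun z : ℂ => -(1 / (2 * π * Complex.I)) *
        ∫ t : ℝ, z ^ (-((c : ℂ) + t * Complex.I)) *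
          riemannZeta (-((c : ℂ) + t * Complex.I)) /
          Complex.sin (π * ((c : ℂ) + t * Complex.I)) * Complex.I)
      {z : ℂ | z ≠ 0 ∧ |Complex.arg z| < π / 2} := by
  obtain ⟨K, hK⟩ := exists_norm_riemannZeta_neg_div_sin_le hc0 hc1
  have hg := continuous_riemannZeta_neg_div_sin hc0 hc1
  have hβ : π / 2 ≤ π := by linarith [pi_pos]
  simp_rw [mul_div_assoc, integral_mul_const]
  refine ⟨fun z hz harg => integrable_cpow_mul hg hK hz harg, ?_⟩
  refine DifferentiableOn.analyticOn (fun z hz => ?_) (isOpen_setOf_abs_arg_lt hβ)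
  exact (((hasDerivAt_integral_cpow_mul hg hK hβ hz.1 hz.2).mul_const I).const_mul
    _).differentiableAt.differentiableWithinAt
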